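/- Let n ≥ 1, w = (w_1,…,w_n) ∈ ℕ^n, s = Σ_{i=1}^n w_i, and t ∈ ℕ with t ≤ s. Over the alphabet {a,b}, let W1 = Π_{x ∈ {0,1}^n} a^{x·w} b a^{s−x·w}, the concatenation taken over all vectors x ∈ {0,1}^n in lexicographic order, and let W2 = (a^t b a^{s−t})^{2^n}. Then |W1| = |W2| = 2^n·(s+1), and there exists a position i with W1[i] = W2[i] = b if and only if there exists x ∈ {0,1}^n with x·w = t. -/
import Mathlib


/-- The two-letter alphabet `{a, b}`. -/
inductive AB
  | a
  | b
deriving DecidableEq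

/-- The inner product `x·w = Σ_i x_i w_i` of a `{0,1}`-vector `x` with `w`. -/
def bdot {n : ℕ} (x : Fin n → Bool) (w : Fin n → ℕ) : ℕ :=
  ∑ i, if x i then w i else 0

/-- The block `a^r b a^{s−r}` over `{a, b}`. -/
def block (s r : ℕ) : List AB :=
  List.replicate r AB.a ++ AB.b :: List.replicate (s - r) AB.a

/-- The Lohrey word `W1 = Π_{x ∈ {0,1}^n} a^{x·w} b a^{s−x·w}`, the
concatenation over all `x ∈ {0,1}^n` in lexicographic order (the `j`-th
vector, `0 ≤ j < 2^n`, has `x_i` equal to the `(n−1−i)`-th binary digit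
of `j`, so that the first coordinate is most significant). -/
def lohreyW1 (n : ℕ) (w : Fin n → ℕ) (s : ℕ) : List AB :=
  ((List.range (2 ^ n)).map fun j =>
    block s (bdot (fun i : Fin n => j.testBit (n - 1 - i.val)) w)).flatten

/-- The word `W2 = (a^t b a^{s−t})^{2^n}`. -/
def lohreyW2 (n s t : ℕ) : List AB :=
  (List.replicate (2 ^ n) (block s t)).flatten

lemma block_length (s r : ℕ) (h : r ≤ s) : (block s r).length = s + 1 := by
  simp [block]; omega

lemma block_b (s r k : ℕ) (h : r ≤ s) : (block s r)[k]? = some AB.b ↔ k = r := by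
  rcases lt_trichotomy k r with hk | hk | hk
  · rw [block, List.getElem?_append_left (by simpa using hk)]
    simp [List.getElem?_replicate, hk]; omega
  · subst hk
    rw [block, List.getElem?_append_right (by simp)]
    simp
  · rw [block, List.getElem?_append_right (by simp; omega)]
    simp only [List.length_replicate]
    have : k - r = (k - r - 1) + 1 := by omega
    rw [this]
    simp [List.getElem?_replicate]
    omega

lemma getElem?_flatten_const (L : ℕ) (hL : 0 < L) : ∀ (l : List (List AB)) (i : ℕ),
    (∀ u ∈ l, u.length = L) →
    (l.flatten)[i]? = (l[i / L]?).bind (fun u => u[i % L]?) := by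
  intro l
  induction l with
  | nil => simp
  | cons u tl ih =>
    intro i hlen
    have hu : u.length = L := hlen u (by simp)
    rw [List.flatten_cons]
    rcases lt_or_ge i L with hi | hi
    · rw [List.getElem?_append_left (by omega),
        Nat.div_eq_of_lt hi, Nat.mod_eq_of_lt hi]
      simp
    · rw [List.getElem?_append_right (by omega), hu,
        ih (i - L) (fun v hv => hlen v (by simp [hv]))]
      rw [Nat.div_eq_sub_div hL hi, Nat.mod_eq_sub_mod hi]
      simp

lemma length_flatten_const (L : ℕ) : ∀ (l : List (List AB)),
    (∀ u ∈ l, u.length = L) → l.flatten.length = l.length * L := by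
  intro l
  induction l with
  | nil => simp
  | cons u tl ih =>
    intro hlen
    simp only [List.flatten_cons, List.length_append, List.length_cons,
      hlen u (by simp), ih (fun v hv => hlen v (by simp [hv]))]
    ring

/-- For `n ≥ 1`, `w ∈ ℕ^n`, `s = Σ_i w_i` and `t ≤ s`, the
Lohrey words satisfy `|W1| = |W2| = 2^n·(s+1)`, and `W1` and `W2` share the
letter `b` at some position iff some `x ∈ {0,1}^n` has `x·w = t`. -/
theorem lohrey_words (n : ℕ) (hn : 1 ≤ n) (w : Fin n → ℕ) (s t : ℕ)
    (hs : s = ∑ i, w i) (ht : t ≤ s) :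
    (lohreyW1 n w s).length = 2 ^ n * (s + 1) ∧
    (lohreyW2 n s t).length = 2 ^ n * (s + 1) ∧
    ((∃ i : ℕ, (lohreyW1 n w s)[i]? = some AB.b ∧ (lohreyW2 n s t)[i]? = some AB.b) ↔
      ∃ x : Fin n → Bool, bdot x w = t) := by
  have hble : ∀ x : Fin n → Bool, bdot x w ≤ s := by
    intro x
    rw [hs, bdot]
    exact Finset.sum_le_sum (fun i _ => by split <;> simp)
  set f : ℕ → ℕ := fun j => bdot (fun i : Fin n => j.testBit (n - 1 - i.val)) w with hf
  have hfle : ∀ j, f j ≤ s := fun j => hble _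
  have hlen1 : ∀ u ∈ (List.range (2 ^ n)).map fun j => block s (f j), u.length = s + 1 := by
    intro u hu
    simp only [List.mem_map] at hu
    obtain ⟨j, _, rfl⟩ := hu
    exact block_length s (f j) (hble _)
  have hlen2 : ∀ u ∈ List.replicate (2 ^ n) (block s t), u.length = s + 1 := by
    intro u hu
    rw [List.eq_of_mem_replicate hu]
    exact block_length s t ht
  have hL : (0:ℕ) < s + 1 := Nat.succ_pos s
  refine ⟨?_, ?_, ?_⟩
  · rw [lohreyW1, length_flatten_const (s+1) _ hlen1]; simp
  · rw [lohreyW2, length_flatten_const (s+1) _ hlen2]; simp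
  -- characterizations
  have hW1 : ∀ i : ℕ, (lohreyW1 n w s)[i]? = some AB.b ↔
      i / (s+1) < 2 ^ n ∧ i % (s+1) = f (i / (s+1)) := by
    intro i
    rw [lohreyW1, getElem?_flatten_const (s+1) hL _ i hlen1]
    rcases lt_or_ge (i / (s+1)) (2^n) with hj | hj
    · rw [List.getElem?_map, List.getElem?_range hj]
      simp only [Option.map_some, Option.bind_some]
      rw [block_b s (f (i / (s+1))) (i % (s+1)) (hfle _)]
      tauto
    · rw [List.getElem?_map, List.getElem?_eq_none (by simpa using hj)]
      exact iff_of_false (by simp) (by omega)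
  have hW2 : ∀ i : ℕ, (lohreyW2 n s t)[i]? = some AB.b ↔
      i / (s+1) < 2 ^ n ∧ i % (s+1) = t := by
    intro i
    rw [lohreyW2, getElem?_flatten_const (s+1) hL _ i hlen2]
    rcases lt_or_ge (i / (s+1)) (2^n) with hj | hj
    · rw [List.getElem?_replicate, if_pos hj]
      simp only [Option.bind_some]
      rw [block_b _ _ _ ht]
      tauto
    · rw [List.getElem?_replicate, if_neg (by omega)]
      exact iff_of_false (by simp) (by omega)
  constructor
  · rintro ⟨i, h1, h2⟩
    rw [hW1] at h1
    rw [hW2] at h2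
    refine ⟨fun i' : Fin n => (i / (s+1)).testBit (n - 1 - i'.val), ?_⟩
    have e1 := h1.2
    have e2 := h2.2
    show f (i / (s+1)) = t
    omega
  · rintro ⟨x, hx⟩
    -- find j < 2^n whose bit vector is x
    have hsurj : ∃ j : Fin (2^n), (fun i : Fin n => (j : ℕ).testBit (n - 1 - i.val)) = x := by
      have hinj : Function.Injective
          (fun (j : Fin (2^n)) (i : Fin n) => (j : ℕ).testBit (n - 1 - i.val)) := by
        intro j1 j2 hj
        apply Fin.ext
        apply Nat.eq_of_testBit_eq
        intro b
        by_cases hb : b < n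
        · have hbb : n - 1 - (n - 1 - b) = b := by omega
          have := congrFun hj ⟨n - 1 - b, by omega⟩
          simpa [hbb] using this
        · have h1 : (j1 : ℕ).testBit b = false :=
            Nat.testBit_eq_false_of_lt (lt_of_lt_of_le j1.isLt
              (Nat.pow_le_pow_right (by norm_num) (by omega)))
          have h2 : (j2 : ℕ).testBit b = false :=
            Nat.testBit_eq_false_of_lt (lt_of_lt_of_le j2.isLt
              (Nat.pow_le_pow_right (by norm_num) (by omega)))
          rw [h1, h2]
      have hcard : Fintype.card (Fin (2^n)) = Fintype.card (Fin n → Bool) := by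
        simp [Fintype.card_fun]
      have hbij := (Fintype.bijective_iff_injective_and_card _).2 ⟨hinj, hcard⟩
      exact hbij.2 x
    obtain ⟨j, hj⟩ := hsurj
    have hdiv : ((j : ℕ) * (s + 1) + t) / (s + 1) = (j : ℕ) := by
      rw [add_comm, Nat.add_mul_div_right _ _ hL, Nat.div_eq_of_lt (by omega), Nat.zero_add]
    have hmod : ((j : ℕ) * (s + 1) + t) % (s + 1) = t := by
      rw [add_comm, Nat.add_mul_mod_self_right, Nat.mod_eq_of_lt (by omega)]
    have hfj : f (j : ℕ) = t := by
      show bdot (fun i : Fin n => (j : ℕ).testBit (n - 1 - i.val)) w = t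
      rw [hj, hx]
    refine ⟨(j : ℕ) * (s + 1) + t, ?_, ?_⟩
    · rw [hW1, hdiv, hmod, hfj]
      exact ⟨j.isLt, rfl⟩
    · rw [hW2, hdiv, hmod]
      exact ⟨j.isLt, rfl⟩
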